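/- Let G(ξ,y,z) = (4 e^{2λy} / λ⁴) [ (cosh(λy) - cos(λξ))² + ( (sinh(λy)/y)(-ξ + λz) + sin(λξ) )² ] for a fixed λ ≠ 0 (with sinh(λy)/y interpreted as λ at y = 0). Then all partial derivatives ∂^{α₁}_ξ ∂^{α₂}_y ∂^{α₃}_z G(0,0,0) vanish for multi-indices with α₁ + α₂ + 2α₃ ≤ 3, and moreover ∂⁴_ξ G(0,0,0) = ∂⁴_y G(0,0,0) = 24, ∂²_ξ ∂²_y G(0,0,0) = 8, and ∂²_z G(0,0,0) = 8. -/

import Mathlib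

open Real

/-- `sinh(λy)/y`, interpreted by its continuous extension `λ` at `y = 0`. -/
noncomputable def shc (lam y : ℝ) : ℝ := if y = 0 then lam else sinh (lam * y) / y

/-- The function `G(ξ,y,z) = (4 e^{2λy}/λ⁴)[(cosh(λy)-cos(λξ))²
+ ((sinh(λy)/y)(-ξ+λz) + sin(λξ))²]`. -/
noncomputable def Gfun (lam : ℝ) (p : ℝ × ℝ × ℝ) : ℝ :=
  (4 * exp (2 * lam * p.2.1) / lam ^ 4) *
    ((cosh (lam * p.2.1) - cos (lam * p.1)) ^ 2
      + (shc lam p.2.1 * (-p.1 + lam * p.2.2) + sin (lam * p.1)) ^ 2)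

/-- Partial derivative in the `ξ` (first) variable. -/
noncomputable def Dxi (f : ℝ × ℝ × ℝ → ℝ) : ℝ × ℝ × ℝ → ℝ :=
  fun p => fderiv ℝ f p (1, 0, 0)

/-- Partial derivative in the `y` (second) variable. -/
noncomputable def Dy (f : ℝ × ℝ × ℝ → ℝ) : ℝ × ℝ × ℝ → ℝ :=
  fun p => fderiv ℝ f p (0, 1, 0)

/-- Partial derivative in the `z` (third) variable. -/
noncomputable def Dz (f : ℝ × ℝ × ℝ → ℝ) : ℝ × ℝ × ℝ → ℝ :=
  fun p => fderiv ℝ f p (0, 0, 1)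

/-!
Give `ξ, y` weight one and `z` weight two. Since `cosh λy - cos λξ = λ²(ξ² + y²)/2 + ⋯` and
`(sinh λy / y)(λz - ξ) + sin λξ = λ²z + ⋯` (dots: terms of weight at least three), `G` is
`(ξ² + y²)² + 4z²` up to terms of weight at least five, which gives all the stated values.

To compute them, a mixed partial at the origin is written as an iterated one-variable derivative
along the axes (in `z`, then `y`, then `ξ`). The one-variable functions that occur are products of
elementary ones, and their derivatives at `0` follow from the Leibniz rule once one records, for
each factor, the order to which it vanishes at `0` and its first non-zero derivative there.
-/

open scoped ContDiff

section LeadingDeriv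

variable {𝕜 : Type*} [NontriviallyNormedField 𝕜]

def HasLeadingDerivAt (f : 𝕜 → 𝕜) (n : ℕ) (c x : 𝕜) : Prop :=
  (∀ k < n, iteratedDeriv k f x = 0) ∧ iteratedDeriv n f x = c

namespace HasLeadingDerivAt

variable {f g : 𝕜 → 𝕜} {m n : ℕ} {a b x : 𝕜}

lemma const_mul (h : HasLeadingDerivAt f n a x) (c : 𝕜) :
    HasLeadingDerivAt (fun y => c * f y) n (c * a) x :=
  ⟨fun k hk => by rw [iteratedDeriv_const_mul_field, h.1 k hk, mul_zero],
    by rw [iteratedDeriv_const_mul_field, h.2]⟩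

lemma add_of_lt (hf : HasLeadingDerivAt f m a x) (hg : HasLeadingDerivAt g n b x) (hmn : m < n)
    (hf' : ContDiffAt 𝕜 m f x) (hg' : ContDiffAt 𝕜 m g x) :
    HasLeadingDerivAt (fun y => f y + g y) m a x := by
  have hsum : ∀ k ≤ m, iteratedDeriv k (fun y => f y + g y) x
      = iteratedDeriv k f x := fun k hk => by
    rw [iteratedDeriv_fun_add (hf'.of_le (by exact_mod_cast hk)) (hg'.of_le (by exact_mod_cast hk)),
      hg.1 k (by omega), add_zero]
  exact ⟨fun k hk => (hsum k hk.le).trans (hf.1 k hk), (hsum m le_rfl).trans hf.2⟩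

lemma mul (hf : HasLeadingDerivAt f m a x) (hg : HasLeadingDerivAt g n b x)
    (hf' : ContDiffAt 𝕜 (m + n) f x) (hg' : ContDiffAt 𝕜 (m + n) g x) :
    HasLeadingDerivAt (fun y => f y * g y) (m + n) ((m + n).choose m * a * b) x := by
  have leibniz : ∀ k ≤ m + n, iteratedDeriv k (fun y => f y * g y) x = ∑ i ∈ .range (k + 1),
      k.choose i * iteratedDeriv i f x * iteratedDeriv (k - i) g x := fun k hk =>
    iteratedDeriv_fun_mul (hf'.of_le (by exact_mod_cast hk)) (hg'.of_le (by exact_mod_cast hk))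
  have term : ∀ k i, i < m ∨ k - i < n →
      (k.choose i : 𝕜) * iteratedDeriv i f x * iteratedDeriv (k - i) g x = 0 := by
    rintro k i (hi | hi)
    · rw [hf.1 i hi, mul_zero, zero_mul]
    · rw [hg.1 _ hi, mul_zero]
  refine ⟨fun k hk => ?_, ?_⟩
  · rw [leibniz k hk.le]
    exact Finset.sum_eq_zero fun i hi => term k i (by rw [Finset.mem_range] at hi; omega)
  · rw [leibniz _ le_rfl, Finset.sum_eq_single m
      (fun i hi him => term _ i (by rw [Finset.mem_range] at hi; omega))
      (by simp), hf.2, Nat.add_sub_cancel_left, hg.2]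

lemma sq (h : HasLeadingDerivAt f n a x) (hf : ContDiffAt 𝕜 (n + n) f x) :
    HasLeadingDerivAt (fun y => f y ^ 2) (n + n) ((n + n).choose n * a * a) x := by
  simpa only [pow_two] using h.mul h hf hf

end HasLeadingDerivAt

lemma hasLeadingDerivAt_zero (f : 𝕜 → 𝕜) (x : 𝕜) : HasLeadingDerivAt f 0 (f x) x :=
  ⟨fun k hk => absurd hk k.not_lt_zero, by rw [iteratedDeriv_zero]⟩

lemma hasLeadingDerivAt_id : HasLeadingDerivAt (fun t : 𝕜 => t) 1 1 0 :=
  ⟨fun k hk => by simp [iteratedDeriv_fun_id_zero, hk.ne], by simp [iteratedDeriv_fun_id_zero]⟩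

end LeadingDeriv

lemma iteratedDeriv_cosh_mul_zero (l : ℝ) (k : ℕ) :
    iteratedDeriv k (fun s => cosh (l * s)) 0 = (l ^ k + (-l) ^ k) / 2 := by
  simp_rw [cosh_eq, ← neg_mul]
  simp (discharger := fun_prop) [iteratedDeriv_fun_add, -neg_mul]

lemma iteratedDeriv_sinh_mul_zero (l : ℝ) (k : ℕ) :
    iteratedDeriv k (fun s => sinh (l * s)) 0 = (l ^ k - (-l) ^ k) / 2 := by
  simp_rw [sinh_eq, ← neg_mul]
  simp (discharger := fun_prop) [iteratedDeriv_fun_sub, -neg_mul]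

@[simp]
lemma shc_zero (l : ℝ) : shc l 0 = l := if_pos rfl

lemma shc_mul_self (l y : ℝ) : shc l y * y = sinh (l * y) := by
  rcases eq_or_ne y 0 with rfl | hy
  · simp
  · rw [shc, if_neg hy, div_mul_cancel₀ _ hy]

lemma shc_eq_dslope (l : ℝ) : shc l = dslope (fun y => sinh (l * y)) 0 := by
  funext y
  rcases eq_or_ne y 0 with rfl | hy
  · rw [dslope_same, shc, if_pos rfl, ← iteratedDeriv_one, iteratedDeriv_sinh_mul_zero]
    ring
  · rw [dslope_of_ne _ hy, slope_def_field, ← shc_mul_self l y]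
    simp [hy]

lemma analyticAt_shc (l y : ℝ) : AnalyticAt ℝ (shc l) y := by
  have hsinh : ∀ x, AnalyticAt ℝ (fun t => sinh (l * t)) x := fun x =>
    analyticAt_sinh.comp (analyticAt_const.mul analyticAt_id)
  rcases eq_or_ne y 0 with rfl | hy
  · obtain ⟨p, hp⟩ := hsinh 0
    rw [shc_eq_dslope]
    exact hp.has_fpower_series_dslope_fslope.analyticAt
  · refine ((hsinh y).div analyticAt_id hy).congr ?_
    filter_upwards [eventually_ne_nhds hy] with t ht
    simp [shc, ht]

@[fun_prop]
lemma contDiff_shc (l : ℝ) {n : WithTop ℕ∞} : ContDiff ℝ n (shc l) :=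
  contDiff_iff_contDiffAt.2 fun y => (analyticAt_shc l y).contDiffAt

lemma iteratedDeriv_shc_zero (l : ℝ) (n : ℕ) :
    iteratedDeriv n (shc l) 0 = (l ^ (n + 1) - (-l) ^ (n + 1)) / (2 * (n + 1)) := by
  have h := iteratedDeriv_fun_mul (n := n + 1) (x := (0 : ℝ)) (f := shc l) (g := fun y => y)
    (by fun_prop) (by fun_prop)
  simp_rw [shc_mul_self, iteratedDeriv_sinh_mul_zero, iteratedDeriv_fun_id_zero] at h
  rw [Finset.sum_eq_single n
    (fun i hi hin => by rw [if_neg (by rw [Finset.mem_range] at hi; omega), mul_zero])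
    (by simp)] at h
  simp only [Nat.choose_succ_self_right, Nat.cast_add, Nat.cast_one, add_tsub_cancel_left,
    if_true, mul_one] at h
  rw [eq_div_iff (by positivity)]
  linear_combination (-2) * h

section DirectionalDeriv

variable {E : Type*} [NormedAddCommGroup E] [NormedSpace ℝ E]

lemma fderiv_add_smul_apply_eq_deriv {f : E → ℝ} (hf : Differentiable ℝ f) (p v : E) (t : ℝ) :
    fderiv ℝ f (p + t • v) v = deriv (fun τ => f (p + τ • v)) t := by
  have hline : HasDerivAt (fun τ : ℝ => p + τ • v) v t := by
    simpa using ((hasDerivAt_id t).smul_const v).const_add p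
  exact ((hf _).hasFDerivAt.comp_hasDerivAt t hline).deriv.symm

lemma ContDiff.iterate_fderiv_apply {f : E → ℝ} (hf : ContDiff ℝ ∞ f) (v : E) (n : ℕ) :
    ContDiff ℝ ∞ ((fun g : E → ℝ => fun q => fderiv ℝ g q v)^[n] f) := by
  induction n generalizing f with
  | zero => exact hf
  | succ n ih => exact ih ((hf.fderiv_right le_rfl).clm_apply contDiff_const)

lemma iterate_fderiv_apply_eq_iteratedDeriv {f : E → ℝ} (hf : ContDiff ℝ ∞ f) (v : E) (n : ℕ)
    (p : E) : (fun g : E → ℝ => fun q => fderiv ℝ g q v)^[n] f p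
      = iteratedDeriv n (fun t : ℝ => f (p + t • v)) 0 := by
  induction n generalizing f with
  | zero => simp
  | succ n ih =>
    rw [Function.iterate_succ_apply, ih ((hf.fderiv_right le_rfl).clm_apply contDiff_const),
      iteratedDeriv_succ']
    congr 1
    funext t
    exact fderiv_add_smul_apply_eq_deriv (hf.differentiable (by simp)) p v t

end DirectionalDeriv

lemma iterate_Dxi_Dy_Dz_apply_zero {f : ℝ × ℝ × ℝ → ℝ} (hf : ContDiff ℝ ∞ f) (a b c : ℕ) :
    Dxi^[a] (Dy^[b] (Dz^[c] f)) (0, 0, 0) = iteratedDeriv a (fun t => iteratedDeriv b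
      (fun s => iteratedDeriv c (fun r => f (t, s, r)) 0) 0) 0 := by
  have hz := hf.iterate_fderiv_apply (0, 0, 1) c
  rw [show Dxi = fun g q => fderiv ℝ g q (1, 0, 0) from rfl,
    show Dy = fun g q => fderiv ℝ g q (0, 1, 0) from rfl,
    show Dz = fun g q => fderiv ℝ g q (0, 0, 1) from rfl,
    iterate_fderiv_apply_eq_iteratedDeriv (hz.iterate_fderiv_apply (0, 1, 0) b)]
  congr 1; funext t
  rw [iterate_fderiv_apply_eq_iteratedDeriv hz]
  congr 1; funext s
  rw [iterate_fderiv_apply_eq_iteratedDeriv hf]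
  simp

section Elementary

lemma hasLeadingDerivAt_one_sub_cos_mul (l : ℝ) :
    HasLeadingDerivAt (fun t => 1 - cos (l * t)) 2 (l ^ 2) 0 := by
  refine ⟨fun k hk => ?_, ?_⟩
  · interval_cases k <;> simp (discharger := fun_prop) [iteratedDeriv_fun_sub,
      iteratedDeriv_const, iteratedDeriv_comp_const_mul contDiff_cos]
  · simp (discharger := fun_prop) [iteratedDeriv_fun_sub, iteratedDeriv_const,
      iteratedDeriv_comp_const_mul contDiff_cos, iteratedDeriv_succ']

lemma hasLeadingDerivAt_sin_mul_sub_mul (l : ℝ) :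
    HasLeadingDerivAt (fun t => sin (l * t) - l * t) 3 (-l ^ 3) 0 := by
  refine ⟨fun k hk => ?_, ?_⟩
  · interval_cases k <;> simp (discharger := fun_prop) [iteratedDeriv_fun_sub,
      iteratedDeriv_comp_const_mul contDiff_sin, iteratedDeriv_succ']
  · simp (discharger := fun_prop) [iteratedDeriv_fun_sub,
      iteratedDeriv_comp_const_mul contDiff_sin, iteratedDeriv_succ']

lemma hasLeadingDerivAt_cosh_mul_sub_one (l : ℝ) :
    HasLeadingDerivAt (fun s => cosh (l * s) - 1) 2 (l ^ 2) 0 := by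
  refine ⟨fun k hk => ?_, ?_⟩
  · interval_cases k <;> simp (discharger := fun_prop) [iteratedDeriv_fun_sub,
      iteratedDeriv_const, iteratedDeriv_cosh_mul_zero]
  · simp (discharger := fun_prop) [iteratedDeriv_fun_sub, iteratedDeriv_const,
      iteratedDeriv_cosh_mul_zero, neg_sq]

end Elementary

noncomputable def xiAxisProfile (l t : ℝ) : ℝ := (1 - cos (l * t)) ^ 2 + (sin (l * t) - l * t) ^ 2

@[fun_prop]
lemma contDiff_xiAxisProfile (l : ℝ) {n : WithTop ℕ∞} : ContDiff ℝ n (xiAxisProfile l) := by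
  unfold xiAxisProfile
  fun_prop

lemma hasLeadingDerivAt_xiAxisProfile (l : ℝ) :
    HasLeadingDerivAt (xiAxisProfile l) 4 (6 * l ^ 4) 0 := by
  have h := ((hasLeadingDerivAt_one_sub_cos_mul l).sq (by fun_prop)).add_of_lt
    ((hasLeadingDerivAt_sin_mul_sub_mul l).sq (by fun_prop)) (by norm_num)
    (by fun_prop) (by fun_prop)
  convert h using 1
  · rfl
  · norm_num [Nat.choose]
    ring

section Gfun

variable (l : ℝ)

lemma contDiff_Gfun : ContDiff ℝ ∞ (Gfun l) := by
  unfold Gfun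
  fun_prop

lemma Gfun_xi_axis (t : ℝ) : Gfun l (t, 0, 0) = 4 / l ^ 4 * xiAxisProfile l t := by
  simp only [Gfun, xiAxisProfile, shc_zero, mul_zero, exp_zero, cosh_zero, add_zero]
  ring

lemma Gfun_y_axis (s : ℝ) :
    Gfun l (0, s, 0) = 4 / l ^ 4 * (exp (2 * l * s) * (cosh (l * s) - 1) ^ 2) := by
  simp only [Gfun, mul_zero, neg_zero, add_zero, cos_zero, sin_zero]
  ring

lemma Gfun_z_axis {l : ℝ} (hl : l ≠ 0) (r : ℝ) : Gfun l (0, 0, r) = 4 * r ^ 2 := by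
  simp only [Gfun, shc_zero, mul_zero, exp_zero, cosh_zero, cos_zero, sin_zero, sub_self,
    neg_zero, zero_add, add_zero]
  field_simp
  ring

lemma deriv_Gfun_z (t s : ℝ) : deriv (fun r => Gfun l (t, s, r)) 0
    = 8 * l * exp (2 * l * s) / l ^ 4 * shc l s * (sin (l * t) - t * shc l s) := by
  have hB : HasDerivAt (fun r => shc l s * (-t + l * r) + sin (l * t)) (shc l s * l) 0 := by
    simpa using ((((hasDerivAt_id (0 : ℝ)).const_mul l).const_add (-t)).const_mul
      (shc l s)).add_const (sin (l * t))
  have hG : HasDerivAt (fun r => Gfun l (t, s, r)) _ 0 :=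
    ((hB.pow 2).const_add ((cosh (l * s) - cos (l * t)) ^ 2)).const_mul
      (4 * exp (2 * l * s) / l ^ 4)
  rw [hG.deriv]
  simp only [Nat.cast_ofNat, Nat.add_one_sub_one, pow_one]
  ring

lemma Gfun_y_line (t : ℝ) : (fun s => Gfun l (t, s, 0)) = fun s => 4 / l ^ 4 *
    (exp (2 * l * s) * ((cosh (l * s) - cos (l * t)) * (cosh (l * s) - cos (l * t))
      + (sin (l * t) - t * shc l s) * (sin (l * t) - t * shc l s))) := by
  funext s
  simp only [Gfun]
  ring

lemma iteratedDeriv_one_Gfun_y (t : ℝ) :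
    iteratedDeriv 1 (fun s => Gfun l (t, s, 0)) 0 = 4 / l ^ 4 * (2 * l * xiAxisProfile l t) := by
  rw [Gfun_y_line, iteratedDeriv_const_mul_field]
  congr 1
  simp (discharger := fun_prop) [iteratedDeriv_fun_mul, iteratedDeriv_fun_add,
    iteratedDeriv_fun_sub, Finset.sum_range_succ, iteratedDeriv_cosh_mul_zero,
    iteratedDeriv_shc_zero, iteratedDeriv_const, xiAxisProfile]
  ring

lemma iteratedDeriv_two_Gfun_y (t : ℝ) : iteratedDeriv 2 (fun s => Gfun l (t, s, 0)) 0 =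
    4 / l ^ 4 * (2 * l ^ 2 * (1 - cos (l * t)) - 2 * l ^ 3 / 3 * (t * (sin (l * t) - l * t))
      + 4 * l ^ 2 * xiAxisProfile l t) := by
  rw [Gfun_y_line, iteratedDeriv_const_mul_field]
  congr 1
  simp (discharger := fun_prop) [iteratedDeriv_fun_mul, iteratedDeriv_fun_add,
    iteratedDeriv_fun_sub, Finset.sum_range_succ, iteratedDeriv_cosh_mul_zero,
    iteratedDeriv_shc_zero, iteratedDeriv_const, xiAxisProfile]
  ring

end Gfun

section GfunLeading

variable {l : ℝ}

lemma hasLeadingDerivAt_Gfun_xi (hl : l ≠ 0) :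
    HasLeadingDerivAt (fun t => Gfun l (t, 0, 0)) 4 24 0 := by
  convert (hasLeadingDerivAt_xiAxisProfile l).const_mul (4 / l ^ 4) using 1
  · exact funext (Gfun_xi_axis l)
  · field_simp; norm_num

lemma hasLeadingDerivAt_Gfun_y (hl : l ≠ 0) :
    HasLeadingDerivAt (fun s => Gfun l (0, s, 0)) 4 24 0 := by
  have h := ((hasLeadingDerivAt_zero (fun s => exp (2 * l * s)) 0).mul
    ((hasLeadingDerivAt_cosh_mul_sub_one l).sq (by fun_prop)) (by fun_prop) (by fun_prop))
  convert h.const_mul (4 / l ^ 4) using 1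
  · exact funext (Gfun_y_axis l)
  · norm_num [Nat.choose]
    field_simp
    norm_num

lemma hasLeadingDerivAt_Gfun_xi_y (hl : l ≠ 0) :
    HasLeadingDerivAt (fun t => iteratedDeriv 1 (fun s => Gfun l (t, s, 0)) 0) 4 (48 * l) 0 := by
  convert ((hasLeadingDerivAt_xiAxisProfile l).const_mul (2 * l)).const_mul (4 / l ^ 4) using 1
  · exact funext (iteratedDeriv_one_Gfun_y l)
  · field_simp; ring

lemma hasLeadingDerivAt_Gfun_xi_yy (hl : l ≠ 0) :
    HasLeadingDerivAt (fun t => iteratedDeriv 2 (fun s => Gfun l (t, s, 0)) 0) 2 8 0 := by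
  have hQ := ((hasLeadingDerivAt_one_sub_cos_mul l).const_mul (2 * l ^ 2)).add_of_lt
    ((hasLeadingDerivAt_id.mul (hasLeadingDerivAt_sin_mul_sub_mul l) (by fun_prop)
      (by fun_prop)).const_mul (-(2 * l ^ 3 / 3))) (by norm_num) (by fun_prop) (by fun_prop)
  have h := hQ.add_of_lt ((hasLeadingDerivAt_xiAxisProfile l).const_mul (4 * l ^ 2))
    (by norm_num) (by fun_prop) (by fun_prop)
  convert h.const_mul (4 / l ^ 4) using 1
  · funext t
    rw [iteratedDeriv_two_Gfun_y]
    ring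
  · field_simp; ring

lemma hasLeadingDerivAt_Gfun_xi_z (hl : l ≠ 0) :
    HasLeadingDerivAt (fun t => deriv (fun r => Gfun l (t, 0, r)) 0) 3 (-8 * l) 0 := by
  convert (hasLeadingDerivAt_sin_mul_sub_mul l).const_mul (8 / l ^ 2) using 1
  · funext t
    rw [deriv_Gfun_z]
    simp only [mul_zero, exp_zero, shc_zero]
    field_simp
  · field_simp

lemma hasLeadingDerivAt_Gfun_z (hl : l ≠ 0) :
    HasLeadingDerivAt (fun r => Gfun l (0, 0, r)) 2 8 0 := by
  convert (hasLeadingDerivAt_id.mul hasLeadingDerivAt_id (by fun_prop) (by fun_prop)).const_mul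
    (4 : ℝ) using 1
  · funext r
    rw [Gfun_z_axis hl]
    ring
  · norm_num

end GfunLeading

lemma iteratedDeriv_Gfun_eq_zero_of_weight_le_three {l : ℝ} (hl : l ≠ 0) (a b c : ℕ) (h : a + b + 2 * c ≤ 3) :
    iteratedDeriv a (fun t => iteratedDeriv b
      (fun s => iteratedDeriv c (fun r => Gfun l (t, s, r)) 0) 0) 0 = 0 := by
  obtain rfl | rfl : c = 0 ∨ c = 1 := by omega
  · simp only [iteratedDeriv_zero]
    obtain rfl | rfl | rfl | rfl : b = 0 ∨ b = 1 ∨ b = 2 ∨ b = 3 := by omega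
    · exact (hasLeadingDerivAt_Gfun_xi hl).1 a (by omega)
    · exact (hasLeadingDerivAt_Gfun_xi_y hl).1 a (by omega)
    · exact (hasLeadingDerivAt_Gfun_xi_yy hl).1 a (by omega)
    · obtain rfl : a = 0 := by omega
      exact (hasLeadingDerivAt_Gfun_y hl).1 3 (by norm_num)
  · simp only [iteratedDeriv_one]
    obtain rfl | rfl : b = 0 ∨ b = 1 := by omega
    · simpa using (hasLeadingDerivAt_Gfun_xi_z hl).1 a (by omega)
    · obtain rfl : a = 0 := by omega
      simp [deriv_Gfun_z]

/-- All partial derivatives `∂^{α₁}_ξ ∂^{α₂}_y ∂^{α₃}_z G(0,0,0)` with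
`α₁ + α₂ + 2α₃ ≤ 3` vanish, and `∂⁴_ξ G(0,0,0) = ∂⁴_y G(0,0,0) = 24`,
`∂²_ξ ∂²_y G(0,0,0) = 8`, `∂²_z G(0,0,0) = 8`. -/
theorem Gfun_derivatives_at_zero (lam : ℝ) (hlam : lam ≠ 0) :
    (∀ a1 a2 a3 : ℕ, a1 + a2 + 2 * a3 ≤ 3 →
        Dxi^[a1] (Dy^[a2] (Dz^[a3] (Gfun lam))) ((0, 0, 0) : ℝ × ℝ × ℝ) = 0) ∧
    Dxi^[4] (Gfun lam) ((0, 0, 0) : ℝ × ℝ × ℝ) = 24 ∧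
    Dy^[4] (Gfun lam) ((0, 0, 0) : ℝ × ℝ × ℝ) = 24 ∧
    Dxi^[2] (Dy^[2] (Gfun lam)) ((0, 0, 0) : ℝ × ℝ × ℝ) = 8 ∧
    Dz^[2] (Gfun lam) ((0, 0, 0) : ℝ × ℝ × ℝ) = 8 := by
  have jet := iterate_Dxi_Dy_Dz_apply_zero (contDiff_Gfun lam)
  refine ⟨fun a b c h => (jet a b c).trans (iteratedDeriv_Gfun_eq_zero_of_weight_le_three hlam a b c h),
    ?_, ?_, ?_, ?_⟩
  · simpa using (jet 4 0 0).trans (by simpa using (hasLeadingDerivAt_Gfun_xi hlam).2)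
  · simpa using (jet 0 4 0).trans (by simpa using (hasLeadingDerivAt_Gfun_y hlam).2)
  · simpa using (jet 2 2 0).trans (by simpa using (hasLeadingDerivAt_Gfun_xi_yy hlam).2)
  · simpa using (jet 0 0 2).trans (by simpa using (hasLeadingDerivAt_Gfun_z hlam).2)
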